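/- For any integer $k \ge 2$, the value of $\dim_k(G) - \dim_k(G - v)$ can be arbitrarily large: for every integer $N$ there exist a finite simple connected graph $G$ and a vertex $v \in V(G)$ such that $G - v$ is connected and $\dim_k(G) - \dim_k(G - v) \ge N$. -/

import Mathlib

open SimpleGraph

/-- The distance-`k` truncated distance `dₖ(x,y) = min{d(x,y), k+1}`, valued in `ℕ∞`
(so unreachable pairs have distance `⊤`, which is truncated to `k+1`). -/
noncomputable def distK {V : Type*} (G : SimpleGraph V) (k : ℕ) (x y : V) : ℕ∞ :=
  min (G.edist x y) (k + 1)

/-- `S` is a distance-`k` resolving set of `G`. -/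
def IsDistKResolving {V : Type*} (G : SimpleGraph V) (k : ℕ) (S : Set V) : Prop :=
  ∀ x y : V, x ≠ y → ∃ z ∈ S, distK G k x z ≠ distK G k y z

/-- The distance-`k` dimension of a finite graph `G`: the minimum cardinality of a
distance-`k` resolving set of `G`. -/
noncomputable def dimK {V : Type*} [Fintype V] (G : SimpleGraph V) (k : ℕ) : ℕ :=
  sInf { m | ∃ S : Finset V, IsDistKResolving G k ↑S ∧ S.card = m }

/-!
Fix a finite set `β` of size `p`. The graph has an apex joined to everything, a hub, for each
`s ⊆ β` a leaf `x_s` joined to the hub and a code vertex `t_s` joined to `x_s`, and for each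
`j ∈ β` a bit vertex `b_j` joined to the `t_s` with `j ∈ s`.

With the apex present, distinct vertices are at distance 1 or 2 according to adjacency, so two
leaves `x_s`, `x_t` are told apart only by one of `x_s, x_t, t_s, t_t`. A resolving set can thus
miss `{x_s, t_s}` for at most one `s`, and has at least `2^p - 1` elements.

Without the apex, the hub and the `p` bit vertices resolve: the hub separates leaves
(distance 1) from code vertices (distance 2), and if `j` lies in exactly one of `s, t` then `b_j`
separates `t_s` from `t_t` (distance 1 versus at least 2) and `x_s` from `x_t` (distance 2 versus
at least 3, which is where `k ≥ 2` is needed).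
-/

section Generic

variable {V W : Type*} {G : SimpleGraph V} {G' : SimpleGraph W} {k : ℕ}

theorem SimpleGraph.Hom.edist_le (φ : G →g G') (x y : V) :
    G'.edist (φ x) (φ y) ≤ G.edist x y := by
  rcases eq_or_ne (G.edist x y) ⊤ with h | h
  · simp [h]
  · obtain ⟨w, hw⟩ := G.exists_walk_of_edist_ne_top h
    calc G'.edist (φ x) (φ y) ≤ (w.map φ).length := SimpleGraph.edist_le _
      _ = G.edist x y := by rw [Walk.length_map, hw]

theorem SimpleGraph.Iso.edist_eq (φ : G ≃g G') (x y : V) :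
    G'.edist (φ x) (φ y) = G.edist x y :=
  le_antisymm (φ.toHom.edist_le x y) (by simpa using φ.symm.toHom.edist_le (φ x) (φ y))

theorem SimpleGraph.Iso.distK_eq (φ : G ≃g G') (x y : V) :
    distK G' k (φ x) (φ y) = distK G k x y := by
  simp only [distK, φ.edist_eq]

def SimpleGraph.Iso.induceNe (φ : G ≃g G') (v : V) :
    G.induce {u | u ≠ v} ≃g G'.induce {u | u ≠ φ v} where
  toEquiv := φ.toEquiv.subtypeEquiv fun _ => φ.injective.ne_iff.symm
  map_rel_iff' := φ.map_adj_iff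

theorem IsDistKResolving.image {S : Set V} (hS : IsDistKResolving G k S) (φ : G ≃g G') :
    IsDistKResolving G' k (φ '' S) := by
  intro x y hxy
  obtain ⟨z, hz, hne⟩ := hS (φ.symm x) (φ.symm y) (φ.symm.injective.ne hxy)
  refine ⟨φ z, Set.mem_image_of_mem φ hz, ?_⟩
  rwa [← φ.apply_symm_apply x, ← φ.apply_symm_apply y, φ.distK_eq, φ.distK_eq]

theorem distK_self_ne {x y : V} (hxy : x ≠ y) : distK G k x x ≠ distK G k y x := by
  have hpos : 0 < distK G k y x :=
    lt_min (G.edist_pos_of_ne hxy.symm) (by exact_mod_cast k.succ_pos)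
  simpa [distK] using hpos.ne

theorem isDistKResolving_univ : IsDistKResolving G k Set.univ :=
  fun x _ hxy => ⟨x, trivial, distK_self_ne hxy⟩

theorem distK_eq_natCast_iff {c : ℕ} (hc : c ≤ k) (x y : V) :
    distK G k x y = c ↔ G.edist x y = c := by
  rw [distK]
  rcases le_total (G.edist x y) (k + 1) with h | h
  · rw [min_eq_left h]
  · rw [min_eq_right h]
    constructor
    · intro h'
      exact absurd h' (by exact_mod_cast (by omega : k + 1 ≠ c))
    · intro h'
      rw [h'] at h
      exact absurd h (by exact_mod_cast (by omega : ¬ k + 1 ≤ c))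

theorem edist_eq_two_of_forall_adj {w x z : V} (hw : ∀ u, u ≠ w → G.Adj w u) (hxz : x ≠ z)
    (h : ¬ G.Adj x z) : G.edist x z = 2 := by
  have hx : x ≠ w := by rintro rfl; exact h (hw z hxz.symm)
  have hz : z ≠ w := by rintro rfl; exact h (hw x hx).symm
  exact edist_eq_two_iff.mpr ⟨hxz, h, w, (hw x hx).symm, (hw z hz).symm⟩

theorem edist_eq_of_forall_adj {w x y z : V} (hw : ∀ u, u ≠ w → G.Adj w u) (hxz : x ≠ z)
    (hyz : y ≠ z) (hadj : G.Adj x z ↔ G.Adj y z) : G.edist x z = G.edist y z := by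
  by_cases h : G.Adj x z
  · rw [edist_eq_one_iff_adj.mpr h, edist_eq_one_iff_adj.mpr (hadj.mp h)]
  · rw [edist_eq_two_of_forall_adj hw hxz h, edist_eq_two_of_forall_adj hw hyz (hadj.not.mp h)]

section Finite

variable [Fintype V] [Fintype W]

theorem dimK_le_card {S : Finset V} (hS : IsDistKResolving G k S) : dimK G k ≤ S.card :=
  Nat.sInf_le ⟨S, hS, rfl⟩

theorem exists_isDistKResolving_card_eq_dimK :
    ∃ S : Finset V, IsDistKResolving G k S ∧ S.card = dimK G k :=
  Nat.sInf_mem (s := {m | ∃ S : Finset V, IsDistKResolving G k S ∧ S.card = m})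
    ⟨_, Finset.univ, by simpa using isDistKResolving_univ, rfl⟩

theorem SimpleGraph.Iso.dimK_le (φ : G ≃g G') : dimK G' k ≤ dimK G k := by
  obtain ⟨S, hS, hcard⟩ := exists_isDistKResolving_card_eq_dimK (G := G) (k := k)
  have hS' : IsDistKResolving G' k (S.map φ.toEquiv.toEmbedding) := by
    simpa [Finset.coe_map] using hS.image φ
  exact (dimK_le_card hS').trans (by rw [Finset.card_map, hcard])

theorem SimpleGraph.Iso.dimK_eq (φ : G ≃g G') : dimK G' k = dimK G k :=
  le_antisymm φ.dimK_le φ.symm.dimK_le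

end Finite

end Generic

inductive CodeVertex (β : Type*)
  | apex
  | hub
  | leaf (s : Finset β)
  | code (s : Finset β)
  | bit (j : β)
deriving DecidableEq, Fintype

namespace CodeVertex

variable {β : Type*} {k : ℕ}

/-- Edges listed in one direction only; `fromRel` symmetrises them and drops the loop at `apex`. -/
def Link : CodeVertex β → CodeVertex β → Prop
  | apex, _ => True
  | hub, leaf _ => True
  | leaf s, code t => s = t
  | code s, bit j => j ∈ s
  | _, _ => False

variable (β) in
def graph : SimpleGraph (CodeVertex β) := SimpleGraph.fromRel Link

theorem graph_adj_apex {u : CodeVertex β} (hu : u ≠ apex) : (graph β).Adj apex u := by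
  simp [graph, Link, hu.symm]

theorem graph_connected : (graph β).Connected :=
  (connected_iff_exists_forall_reachable _).mpr ⟨apex, fun u => by
    rcases eq_or_ne u apex with rfl | hu
    · rfl
    · exact (graph_adj_apex hu).reachable⟩

theorem distK_leaf_eq_distK_leaf {s t : Finset β} {z : CodeVertex β} (hs : z ≠ leaf s)
    (ht : z ≠ leaf t) (hcs : z ≠ code s) (hct : z ≠ code t) :
    distK (graph β) k (leaf s) z = distK (graph β) k (leaf t) z := by
  rw [distK, distK, edist_eq_of_forall_adj (fun _ => graph_adj_apex) hs.symm ht.symm]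
  cases z <;> simp_all [graph, Link, eq_comm]

theorem exists_mem_of_isDistKResolving {S : Set (CodeVertex β)}
    (hS : IsDistKResolving (graph β) k S) {s t : Finset β} (hst : s ≠ t) :
    ∃ z ∈ S, z = leaf s ∨ z = leaf t ∨ z = code s ∨ z = code t := by
  obtain ⟨z, hz, hne⟩ := hS (leaf s) (leaf t) (by simpa using hst)
  refine ⟨z, hz, ?_⟩
  by_contra! h
  exact hne (distK_leaf_eq_distK_leaf h.1 h.2.1 h.2.2.1 h.2.2.2)

theorem two_pow_le_card_add_one [Fintype β] {S : Finset (CodeVertex β)}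
    (hS : IsDistKResolving (graph β) k S) :
    2 ^ Fintype.card β ≤ S.card + 1 := by
  classical
  set M := Finset.univ.filter fun s : Finset β => leaf s ∈ S ∨ code s ∈ S
  have hM : M.card ≤ S.card := by
    refine Finset.card_le_card_of_injOn (fun s => if leaf s ∈ S then leaf s else code s) ?_ ?_
    · intro s hs
      simp only [M, Finset.mem_coe, Finset.mem_filter] at hs
      dsimp only
      split_ifs with h
      · exact h
      · exact hs.2.resolve_left h
    · intro s _ t _ h
      dsimp only at h
      split_ifs at h <;> simpa using h
  have hMc : Mᶜ.card ≤ 1 := by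
    refine Finset.card_le_one.mpr fun s hs t ht => ?_
    by_contra hst
    obtain ⟨z, hz, hz'⟩ := exists_mem_of_isDistKResolving hS hst
    simp only [M, Finset.mem_compl, Finset.mem_filter] at hs ht
    rcases hz' with rfl | rfl | rfl | rfl <;> simp_all
  calc 2 ^ Fintype.card β = M.card + Mᶜ.card := by
        rw [Finset.card_add_card_compl, Fintype.card_finset]
    _ ≤ S.card + 1 := by omega

theorem two_pow_le_dimK_add_one [Fintype β] :
    2 ^ Fintype.card β ≤ dimK (graph β) k + 1 := by
  obtain ⟨S, hS, hcard⟩ := exists_isDistKResolving_card_eq_dimK (G := graph β) (k := k)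
  exact hcard ▸ two_pow_le_card_add_one hS

variable (β) in
abbrev punctured : SimpleGraph ({u | u ≠ apex} : Set (CodeVertex β)) :=
  (graph β).induce {u | u ≠ apex}

theorem punctured_connected : (punctured β).Connected := by
  have hub_reach : ∀ u, (punctured β).Reachable ⟨hub, by simp⟩ u := by
    have leaf_reach (s : Finset β) :
        (punctured β).Reachable ⟨hub, by simp⟩ ⟨leaf s, by simp⟩ :=
      Adj.reachable (by simp [graph, Link])
    have code_reach (s : Finset β) :
        (punctured β).Reachable ⟨hub, by simp⟩ ⟨code s, by simp⟩ :=
      (leaf_reach s).trans (Adj.reachable (by simp [graph, Link]))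
    rintro ⟨_ | _ | s | s | j, hu⟩
    · exact absurd rfl hu
    · rfl
    · exact leaf_reach s
    · exact code_reach s
    · exact (code_reach {j}).trans (Adj.reachable (by simp [graph, Link]))
  exact (connected_iff_exists_forall_reachable _).mpr ⟨_, hub_reach⟩

theorem punctured_distK_leaf_hub (hk : 1 ≤ k) (s : Finset β) :
    distK (punctured β) k ⟨leaf s, by simp⟩ ⟨hub, by simp⟩ = 1 := by
  rw [← Nat.cast_one, distK_eq_natCast_iff hk, Nat.cast_one, edist_eq_one_iff_adj]
  simp [graph, Link]

theorem punctured_distK_code_hub_ne (hk : 1 ≤ k) (s : Finset β) :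
    distK (punctured β) k ⟨code s, by simp⟩ ⟨hub, by simp⟩ ≠ 1 := by
  rw [← Nat.cast_one, Ne, distK_eq_natCast_iff hk, Nat.cast_one, edist_eq_one_iff_adj]
  simp [graph, Link]

theorem punctured_distK_code_bit_eq_one_iff (hk : 1 ≤ k) (s : Finset β) (j : β) :
    distK (punctured β) k ⟨code s, by simp⟩ ⟨bit j, by simp⟩ = 1 ↔ j ∈ s := by
  rw [← Nat.cast_one, distK_eq_natCast_iff hk, Nat.cast_one, edist_eq_one_iff_adj]
  simp [graph, Link]

theorem punctured_distK_leaf_bit_eq_two_iff (hk : 2 ≤ k) (s : Finset β) (j : β) :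
    distK (punctured β) k ⟨leaf s, by simp⟩ ⟨bit j, by simp⟩ = 2 ↔ j ∈ s := by
  rw [← Nat.cast_ofNat, distK_eq_natCast_iff hk, Nat.cast_ofNat, edist_eq_two_iff]
  constructor
  · rintro ⟨-, -, ⟨⟨_ | _ | t | t | i, hw⟩, hsw, hwj⟩⟩
    · exact absurd rfl hw
    all_goals simp_all [graph, Link]
  · intro hj
    refine ⟨by simp, by simp [graph, Link], ⟨code s, by simp⟩, ?_, ?_⟩ <;>
      simp [graph, Link, hj]

theorem punctured_dimK_le [Fintype β] [DecidableEq β] (hk : 2 ≤ k) :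
    dimK (punctured β) k ≤ Fintype.card β + 1 := by
  have hk1 : 1 ≤ k := by omega
  set S : Finset ({u | u ≠ apex} : Set (CodeVertex β)) :=
    insert ⟨hub, by simp⟩ (Finset.univ.image fun j => ⟨bit j, by simp⟩)
  have hub_mem : ⟨hub, by simp⟩ ∈ S := Finset.mem_insert_self _ _
  have bit_mem (j : β) : ⟨bit j, by simp⟩ ∈ S :=
    Finset.mem_insert_of_mem (Finset.mem_image_of_mem _ (Finset.mem_univ j))
  have leaf_or_code : ∀ a ∉ S,
      (∃ s, a = ⟨leaf s, by simp⟩) ∨ (∃ s, a = ⟨code s, by simp⟩) := by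
    rintro ⟨_ | _ | s | s | j, ha⟩ haS
    · exact absurd rfl ha
    · exact absurd hub_mem haS
    · exact .inl ⟨s, rfl⟩
    · exact .inr ⟨s, rfl⟩
    · exact absurd (bit_mem j) haS
  have hS : IsDistKResolving (punctured β) k S := by
    intro a b hab
    by_cases ha : a ∈ S
    · exact ⟨a, ha, distK_self_ne hab⟩
    by_cases hb : b ∈ S
    · exact ⟨b, hb, (distK_self_ne hab.symm).symm⟩
    rcases leaf_or_code a ha with ⟨s, rfl⟩ | ⟨s, rfl⟩ <;>
      rcases leaf_or_code b hb with ⟨t, rfl⟩ | ⟨t, rfl⟩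
    · have hst : s ≠ t := by rintro rfl; exact hab rfl
      obtain ⟨j, hj⟩ := not_forall.mp (mt Finset.ext hst)
      refine ⟨_, bit_mem j, fun h => hj ?_⟩
      rw [← punctured_distK_leaf_bit_eq_two_iff hk, h, punctured_distK_leaf_bit_eq_two_iff hk]
    · refine ⟨_, hub_mem, ?_⟩
      rw [punctured_distK_leaf_hub hk1]
      exact (punctured_distK_code_hub_ne hk1 t).symm
    · refine ⟨_, hub_mem, ?_⟩
      rw [punctured_distK_leaf_hub hk1]
      exact punctured_distK_code_hub_ne hk1 s
    · have hst : s ≠ t := by rintro rfl; exact hab rfl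
      obtain ⟨j, hj⟩ := not_forall.mp (mt Finset.ext hst)
      refine ⟨_, bit_mem j, fun h => hj ?_⟩
      rw [← punctured_distK_code_bit_eq_one_iff hk1, h,
        punctured_distK_code_bit_eq_one_iff hk1]
  calc dimK (punctured β) k ≤ S.card := dimK_le_card hS
    _ ≤ (Finset.univ.image fun j => (⟨bit j, by simp⟩ : {u | u ≠ apex})).card + 1 :=
      Finset.card_insert_le _ _
    _ ≤ Fintype.card β + 1 := by
      gcongr
      exact Finset.card_image_le.trans Finset.card_univ.le

end CodeVertex

/-- For any integer `k ≥ 2`, `dimₖ(G) - dimₖ(G - v)` can be arbitrarily large. -/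
theorem stmt17 (k : ℕ) (hk : 2 ≤ k) (N : ℤ) :
    ∃ (n : ℕ) (G : SimpleGraph (Fin n)) (v : Fin n),
      G.Connected ∧ (G.induce {u : Fin n | u ≠ v}).Connected ∧
      N ≤ (dimK G k : ℤ) - (dimK (G.induce {u : Fin n | u ≠ v}) k : ℤ) := by
  let φ := (CodeVertex.graph (Fin (N.toNat + 2))).overFinIso rfl
  let ψ : CodeVertex.punctured _ ≃g _ := φ.induceNe .apex
  refine ⟨_, _, φ .apex, φ.connected_iff.mp CodeVertex.graph_connected,
    ψ.connected_iff.mp CodeVertex.punctured_connected, ?_⟩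
  rw [φ.dimK_eq, ψ.dimK_eq]
  have hlower := CodeVertex.two_pow_le_dimK_add_one (β := Fin (N.toNat + 2)) (k := k)
  have hupper := CodeVertex.punctured_dimK_le (β := Fin (N.toNat + 2)) hk
  rw [Fintype.card_fin, pow_add] at hlower
  rw [Fintype.card_fin] at hupper
  have := N.toNat.lt_two_pow_self
  omega
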